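/- There exists a constant C > 0 such that for every integer ℓ ≥ 2, the sum over all integers m with ℓ − ℓ^{1/3} ≤ m ≤ ℓ−1 and ℓ−m even of A_{ℓ,m}² is at most C·ℓ^{2/3}. -/

import Mathlib

open Real Finset

/-- γ(x) = Γ(x/2 + 1/2) / Γ(x/2 + 1). -/
noncomputable def gam (x : ℝ) : ℝ := Real.Gamma (x/2 + 1/2) / Real.Gamma (x/2 + 1)

/-- A_{ℓ,m} = sqrt(((2ℓ+1)/π)·γ(ℓ−m)·γ(ℓ+m)) if |m| ≤ ℓ and ℓ−m is even, else 0. -/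
noncomputable def Acoef (ℓ : ℕ) (m : ℤ) : ℝ :=
  if |m| ≤ (ℓ : ℤ) ∧ Even ((ℓ : ℤ) - m) then
    Real.sqrt ((2*(ℓ:ℝ)+1)/Real.pi * gam ((ℓ : ℝ) - (m : ℝ)) * gam ((ℓ : ℝ) + (m : ℝ)))
  else 0

lemma gam_nonneg (x : ℝ) (hx : 0 ≤ x) : 0 ≤ gam x := by
  have h1 : 0 < Real.Gamma (x/2 + 1/2) := Real.Gamma_pos_of_pos (by linarith)
  have h2 : 0 < Real.Gamma (x/2 + 1) := Real.Gamma_pos_of_pos (by linarith)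
  exact le_of_lt (div_pos h1 h2)

lemma gam_le (x : ℝ) (hx : 0 < x) : gam x ≤ Real.sqrt (2 / x) := by
  set a := x/2 with ha
  have ha0 : 0 < a := by positivity
  have hΓa : 0 < Real.Gamma a := Real.Gamma_pos_of_pos ha0
  have hΓa1 : 0 < Real.Gamma (a+1) := Real.Gamma_pos_of_pos (by linarith)
  have hΓh : 0 < Real.Gamma (a+1/2) := Real.Gamma_pos_of_pos (by linarith)
  have h := Real.convexOn_log_Gamma.2 (Set.mem_Ioi.2 ha0)
    (Set.mem_Ioi.2 (show (0:ℝ) < a+1 by linarith))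
    (by norm_num : (0:ℝ) ≤ 1/2) (by norm_num : (0:ℝ) ≤ 1/2) (by norm_num)
  simp only [Function.comp_apply, smul_eq_mul] at h
  have hmid : (1/2 : ℝ) * a + (1/2 : ℝ) * (a+1) = a + 1/2 := by ring
  rw [hmid] at h
  have hsq : Real.Gamma (a+1/2) ^ 2 ≤ Real.Gamma a * Real.Gamma (a+1) := by
    have h2 : Real.log (Real.Gamma (a+1/2) ^ 2) ≤ Real.log (Real.Gamma a * Real.Gamma (a+1)) := by
      rw [Real.log_pow, Real.log_mul hΓa.ne' hΓa1.ne']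
      push_cast
      linarith
    exact (Real.log_le_log_iff (by positivity) (by positivity)).mp h2
  have hrec : Real.Gamma (a+1) = a * Real.Gamma a := Real.Gamma_add_one ha0.ne'
  have key : (gam x) ^ 2 ≤ 2 / x := by
    have hgx : gam x = Real.Gamma (a+1/2) / Real.Gamma (a+1) := rfl
    rw [hgx, div_pow]
    rw [div_le_iff₀ (by positivity)]
    have h2x : 2 / x = 1 / a := by rw [ha]; field_simp
    rw [h2x]
    calc Real.Gamma (a+1/2) ^ 2 ≤ Real.Gamma a * Real.Gamma (a+1) := hsq
      _ = 1 / a * Real.Gamma (a+1) ^ 2 := by rw [hrec]; field_simp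
  have hg : 0 ≤ gam x := gam_nonneg x hx.le
  calc gam x = Real.sqrt ((gam x)^2) := by rw [Real.sqrt_sq hg]
    _ ≤ Real.sqrt (2/x) := Real.sqrt_le_sqrt key

lemma sum_inv_sqrt_le (K : ℕ) : ∑ k ∈ Finset.Icc 1 K, 1 / Real.sqrt k ≤ 2 * Real.sqrt K := by
  induction K with
  | zero => simp
  | succ n ih =>
    rw [Finset.sum_Icc_succ_top (by omega : 1 ≤ n + 1)]
    have h1 : Real.sqrt ((n:ℝ)*((n:ℝ)+1)) ≤ (n:ℝ) + 1/2 := by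
      rw [show ((n:ℝ) + 1/2) = Real.sqrt (((n:ℝ)+1/2)^2) from (Real.sqrt_sq (by positivity)).symm]
      apply Real.sqrt_le_sqrt; nlinarith
    have h2 : Real.sqrt ((n:ℝ)) * Real.sqrt ((n:ℝ)+1) = Real.sqrt ((n:ℝ)*((n:ℝ)+1)) :=
      (Real.sqrt_mul (by positivity) _).symm
    have hs1 : 0 < Real.sqrt ((n:ℝ)+1) := Real.sqrt_pos.mpr (by positivity)
    have hsq : Real.sqrt ((n:ℝ)+1) ^ 2 = (n:ℝ)+1 := Real.sq_sqrt (by positivity)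
    have key : 1 / Real.sqrt ((n:ℝ)+1) ≤ 2 * Real.sqrt ((n:ℝ)+1) - 2 * Real.sqrt (n:ℝ) := by
      rw [div_le_iff₀ hs1]
      nlinarith [Real.sqrt_nonneg (n:ℝ)]
    push_cast
    push_cast at ih
    linarith

open scoped Classical in
theorem sum_Acoef_sq_near_edge_le :
    ∃ C > 0, ∀ ℓ : ℕ, 2 ≤ ℓ →
      ∑ m ∈ (Finset.Icc (0:ℤ) ((ℓ:ℤ) - 1)).filter
          (fun m : ℤ => (ℓ:ℝ) - (ℓ:ℝ) ^ ((1:ℝ)/3) ≤ (m:ℝ) ∧ Even ((ℓ:ℤ) - m)),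
        (Acoef ℓ m)^2 ≤ C * (ℓ:ℝ) ^ ((2:ℝ)/3) := by
  refine ⟨4, by norm_num, fun ℓ hℓ => ?_⟩
  set S := (Finset.Icc (0:ℤ) ((ℓ:ℤ) - 1)).filter
      (fun m : ℤ => (ℓ:ℝ) - (ℓ:ℝ) ^ ((1:ℝ)/3) ≤ (m:ℝ) ∧ Even ((ℓ:ℤ) - m)) with hS
  have hℓR : (2:ℝ) ≤ (ℓ:ℝ) := by exact_mod_cast hℓ
  have hℓpos : (0:ℝ) < (ℓ:ℝ) := by linarith
  set K : ℕ := ⌊(ℓ:ℝ) ^ ((1:ℝ)/3)⌋₊ with hK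
  set g : ℤ → ℕ := fun m => ((ℓ:ℤ) - m).toNat / 2 with hg
  -- membership facts
  have hmem : ∀ m ∈ S, 0 ≤ m ∧ m ≤ (ℓ:ℤ) - 1 ∧ ((ℓ:ℝ) - (ℓ:ℝ) ^ ((1:ℝ)/3) ≤ (m:ℝ))
      ∧ Even ((ℓ:ℤ) - m) := by
    intro m hm
    rw [hS, Finset.mem_filter, Finset.mem_Icc] at hm
    exact ⟨hm.1.1, hm.1.2, hm.2.1, hm.2.2⟩
  -- per-term bound
  have hterm : ∀ m ∈ S, (Acoef ℓ m)^2 ≤ 2 * Real.sqrt ℓ * (1 / Real.sqrt (g m)) := by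
    intro m hm
    obtain ⟨hm0, hm1, hlow, heven⟩ := hmem m hm
    obtain ⟨t, ht⟩ := heven
    have ht1 : 1 ≤ t := by omega
    have hgm : (g m : ℤ) = t := by simp only [hg, ht]; omega
    have hgmR : ((g m : ℕ) : ℝ) = (t : ℝ) := by exact_mod_cast congrArg (fun z : ℤ => (z:ℝ)) hgm
    have htR : (1:ℝ) ≤ (t:ℝ) := by exact_mod_cast ht1
    have hlm : ((ℓ:ℝ) - (m:ℝ)) = 2 * (t:ℝ) := by
      have : ((ℓ:ℤ) - m : ℤ) = 2 * t := by omega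
      exact_mod_cast congrArg (fun z : ℤ => (z:ℝ)) this
    have hlmpos : (0:ℝ) < (ℓ:ℝ) - (m:ℝ) := by rw [hlm]; linarith
    have hmR0 : (0:ℝ) ≤ (m:ℝ) := by exact_mod_cast hm0
    have hcond : |m| ≤ (ℓ:ℤ) ∧ Even ((ℓ:ℤ) - m) := by
      constructor
      · rw [abs_le]; omega
      · exact ⟨t, ht⟩
    have hA : (Acoef ℓ m)^2 = (2*(ℓ:ℝ)+1)/Real.pi * gam ((ℓ:ℝ) - (m:ℝ)) * gam ((ℓ:ℝ) + (m:ℝ)) := by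
      rw [Acoef, if_pos hcond, Real.sq_sqrt]
      have := gam_nonneg ((ℓ:ℝ) - (m:ℝ)) hlmpos.le
      have := gam_nonneg ((ℓ:ℝ) + (m:ℝ)) (by linarith)
      have hpi := Real.pi_pos
      positivity
    rw [hA]
    -- bounds on the two gam factors
    have hb1 : gam ((ℓ:ℝ) - (m:ℝ)) ≤ 1 / Real.sqrt (t:ℝ) := by
      calc gam ((ℓ:ℝ) - (m:ℝ)) ≤ Real.sqrt (2 / ((ℓ:ℝ) - (m:ℝ))) := gam_le _ hlmpos
        _ = 1 / Real.sqrt (t:ℝ) := by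
            rw [hlm, show (2:ℝ) / (2 * (t:ℝ)) = ((t:ℝ))⁻¹ by field_simp,
              Real.sqrt_inv, one_div]
    have hb2 : gam ((ℓ:ℝ) + (m:ℝ)) ≤ Real.sqrt 2 / Real.sqrt (ℓ:ℝ) := by
      calc gam ((ℓ:ℝ) + (m:ℝ)) ≤ Real.sqrt (2 / ((ℓ:ℝ) + (m:ℝ))) := gam_le _ (by linarith)
        _ ≤ Real.sqrt (2 / (ℓ:ℝ)) := by
            apply Real.sqrt_le_sqrt
            apply div_le_div_of_nonneg_left (by norm_num) hℓpos (by linarith)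
        _ = Real.sqrt 2 / Real.sqrt (ℓ:ℝ) := by
            rw [Real.sqrt_div (by norm_num : (0:ℝ) ≤ 2)]
    have hg1 : 0 ≤ gam ((ℓ:ℝ) - (m:ℝ)) := gam_nonneg _ hlmpos.le
    have hg2 : 0 ≤ gam ((ℓ:ℝ) + (m:ℝ)) := gam_nonneg _ (by linarith)
    have hc : 0 < (2*(ℓ:ℝ)+1)/Real.pi := by positivity
    have hst : 0 < Real.sqrt (t:ℝ) := Real.sqrt_pos.mpr (by linarith)
    have hsl : 0 < Real.sqrt (ℓ:ℝ) := Real.sqrt_pos.mpr hℓpos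
    have step : (2*(ℓ:ℝ)+1)/Real.pi * gam ((ℓ:ℝ) - (m:ℝ)) * gam ((ℓ:ℝ) + (m:ℝ))
        ≤ (2*(ℓ:ℝ)+1)/Real.pi * (1 / Real.sqrt (t:ℝ)) * (Real.sqrt 2 / Real.sqrt (ℓ:ℝ)) := by
      apply mul_le_mul
      · exact mul_le_mul_of_nonneg_left hb1 hc.le
      · exact hb2
      · exact hg2
      · positivity
    refine step.trans ?_
    rw [hgmR]
    -- (2ℓ+1)/π * (1/√t) * (√2/√ℓ) ≤ 2√ℓ * (1/√t)
    have hcoef : (2*(ℓ:ℝ)+1)/Real.pi ≤ (ℓ:ℝ) := by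
      rw [div_le_iff₀ Real.pi_pos]
      nlinarith [Real.pi_gt_three]
    have hdiv : (ℓ:ℝ) / Real.sqrt (ℓ:ℝ) = Real.sqrt (ℓ:ℝ) := Real.div_sqrt
    have hs2 : Real.sqrt 2 ≤ 2 := by
      nlinarith [Real.sq_sqrt (by norm_num : (0:ℝ) ≤ 2), Real.sqrt_nonneg 2]
    have key : (2*(ℓ:ℝ)+1)/Real.pi * (Real.sqrt 2 / Real.sqrt (ℓ:ℝ)) ≤ 2 * Real.sqrt (ℓ:ℝ) := by
      calc (2*(ℓ:ℝ)+1)/Real.pi * (Real.sqrt 2 / Real.sqrt (ℓ:ℝ))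
          ≤ (ℓ:ℝ) * (Real.sqrt 2 / Real.sqrt (ℓ:ℝ)) := by
            apply mul_le_mul_of_nonneg_right hcoef (by positivity)
        _ = Real.sqrt 2 * ((ℓ:ℝ) / Real.sqrt (ℓ:ℝ)) := by ring
        _ = Real.sqrt 2 * Real.sqrt (ℓ:ℝ) := by rw [hdiv]
        _ ≤ 2 * Real.sqrt (ℓ:ℝ) := mul_le_mul_of_nonneg_right hs2 hsl.le
    calc (2*(ℓ:ℝ)+1)/Real.pi * (1 / Real.sqrt (t:ℝ)) * (Real.sqrt 2 / Real.sqrt (ℓ:ℝ))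
        = ((2*(ℓ:ℝ)+1)/Real.pi * (Real.sqrt 2 / Real.sqrt (ℓ:ℝ))) * (1 / Real.sqrt (t:ℝ)) := by
          ring
      _ ≤ (2 * Real.sqrt (ℓ:ℝ)) * (1 / Real.sqrt (t:ℝ)) :=
          mul_le_mul_of_nonneg_right key (by positivity)
  -- sum the per-term bounds
  have h1 : ∑ m ∈ S, (Acoef ℓ m)^2 ≤ ∑ m ∈ S, 2 * Real.sqrt ℓ * (1 / Real.sqrt (g m)) :=
    Finset.sum_le_sum hterm
  have hinj : Set.InjOn g ↑S := by
    intro m1 h1 m2 h2 he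
    obtain ⟨a0, a1, _, ae⟩ := hmem m1 h1
    obtain ⟨b0, b1, _, be⟩ := hmem m2 h2
    rw [Int.even_iff] at ae be
    simp only [hg] at he
    omega
  have h2 : ∑ m ∈ S, (1 / Real.sqrt (g m)) = ∑ k ∈ S.image g, 1 / Real.sqrt k :=
    (Finset.sum_image (f := fun k : ℕ => 1 / Real.sqrt (k:ℝ))
      (fun x hx y hy h => hinj hx hy h)).symm
  have hsub : S.image g ⊆ Finset.Icc 1 K := by
    intro k hk
    rw [Finset.mem_image] at hk
    obtain ⟨m, hm, hgm⟩ := hk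
    obtain ⟨hm0, hm1, hlow, heven⟩ := hmem m hm
    obtain ⟨t, ht⟩ := heven
    have ht1 : 1 ≤ t := by omega
    have hkt : (k : ℤ) = t := by rw [← hgm]; simp only [hg, ht]; omega
    rw [Finset.mem_Icc]
    constructor
    · omega
    · -- 2t = ℓ - m ≤ ℓ^{1/3}, so t ≤ ℓ^{1/3}
      apply Nat.le_floor
      have hlm : ((ℓ:ℝ) - (m:ℝ)) = 2 * (t:ℝ) := by
        have : ((ℓ:ℤ) - m : ℤ) = 2 * t := by omega
        exact_mod_cast congrArg (fun z : ℤ => (z:ℝ)) this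
      have htle : 2 * (t:ℝ) ≤ (ℓ:ℝ) ^ ((1:ℝ)/3) := by linarith [hlow, hlm.symm.le]
      have : (k:ℝ) = (t:ℝ) := by exact_mod_cast congrArg (fun z : ℤ => (z:ℝ)) hkt
      rw [this]
      nlinarith [htle]
  have hnn : ∀ k ∈ Finset.Icc 1 K, k ∉ S.image g → 0 ≤ 1 / Real.sqrt k := by
    intro k _ _; positivity
  have h3 : ∑ k ∈ S.image g, 1 / Real.sqrt k ≤ ∑ k ∈ Finset.Icc 1 K, 1 / Real.sqrt k :=
    Finset.sum_le_sum_of_subset_of_nonneg hsub hnn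
  have h4 := sum_inv_sqrt_le K
  have hKle : Real.sqrt K ≤ (ℓ:ℝ) ^ ((1:ℝ)/6) := by
    have hf : (K:ℝ) ≤ (ℓ:ℝ) ^ ((1:ℝ)/3) := Nat.floor_le (by positivity)
    calc Real.sqrt K ≤ Real.sqrt ((ℓ:ℝ) ^ ((1:ℝ)/3)) := Real.sqrt_le_sqrt hf
      _ = (ℓ:ℝ) ^ ((1:ℝ)/6) := by
          rw [Real.sqrt_eq_rpow, ← Real.rpow_mul hℓpos.le]
          norm_num
  have hfinal : 2 * Real.sqrt (ℓ:ℝ) * (2 * Real.sqrt K) ≤ 4 * (ℓ:ℝ) ^ ((2:ℝ)/3) := by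
    have hsr : Real.sqrt (ℓ:ℝ) = (ℓ:ℝ) ^ ((1:ℝ)/2) := Real.sqrt_eq_rpow _
    have hmul : (ℓ:ℝ) ^ ((1:ℝ)/2) * (ℓ:ℝ) ^ ((1:ℝ)/6) = (ℓ:ℝ) ^ ((2:ℝ)/3) := by
        rw [← Real.rpow_add hℓpos]; norm_num
    calc 2 * Real.sqrt (ℓ:ℝ) * (2 * Real.sqrt K)
        ≤ 2 * Real.sqrt (ℓ:ℝ) * (2 * (ℓ:ℝ) ^ ((1:ℝ)/6)) := by
          apply mul_le_mul_of_nonneg_left (by linarith) (by positivity)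
      _ = 4 * ((ℓ:ℝ) ^ ((1:ℝ)/2) * (ℓ:ℝ) ^ ((1:ℝ)/6)) := by rw [hsr]; ring
      _ = 4 * (ℓ:ℝ) ^ ((2:ℝ)/3) := by rw [hmul]
  calc ∑ m ∈ S, (Acoef ℓ m)^2
      ≤ ∑ m ∈ S, 2 * Real.sqrt ℓ * (1 / Real.sqrt (g m)) := h1
    _ = 2 * Real.sqrt ℓ * ∑ m ∈ S, (1 / Real.sqrt (g m)) := by rw [Finset.mul_sum]
    _ = 2 * Real.sqrt ℓ * ∑ k ∈ S.image g, 1 / Real.sqrt k := by rw [h2]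
    _ ≤ 2 * Real.sqrt ℓ * ∑ k ∈ Finset.Icc 1 K, 1 / Real.sqrt k := by
        apply mul_le_mul_of_nonneg_left h3 (by positivity)
    _ ≤ 2 * Real.sqrt ℓ * (2 * Real.sqrt K) := by
        apply mul_le_mul_of_nonneg_left h4 (by positivity)
    _ ≤ 4 * (ℓ:ℝ) ^ ((2:ℝ)/3) := hfinal
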